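/- arXiv:2510.26660 — 13 statements merged into one kernel-verified Lean document; each statement's English description precedes it below -/
import Mathlib

section
/- For any monoid M, the Schützenberger construction 𝔻(M) is a well-defined category: for morphisms x : a → b (so x = u*b for some u) and y : b → c (so y = b*w for some w), the composite element satisfies u*y = x*w, lies in aM ∩ Mc, and is independent of the choices of u and w; this composition is associative; and the element a is a two-sided identity morphism at the object a. -/
universe u

/-- For any monoid `M`, the Schützenberger construction `𝔻(M)` is a
well-defined category: for morphisms `x : a → b` (so `x = u*b` for some `u`, `x = a*v`)
and `y : b → c` (so `y = b*w` and `y = r*c`), the composite element satisfies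
`u*y = x*w`, lies in `aM ∩ Mc`, and is independent of the choices of `u` and `w`;
this composition is associative; and the element `a` is a two-sided identity morphism
at the object `a`. -/
theorem schutzenberger_category_well_defined (M : Type u) [Monoid M] :
    -- the composite of `x : a → b` and `y : b → c` satisfies `u*y = x*w` and lies in `aM ∩ Mc`
    (∀ a b c x y u v w r : M, x = a * v → x = u * b → y = b * w → y = r * c →
      u * y = x * w ∧ (∃ v', x * w = a * v') ∧ (∃ u', x * w = u' * c)) ∧
    -- the composite is independent of the choices of `u` and `w`
    (∀ b x y u u' w w' : M, x = u * b → x = u' * b → y = b * w → y = b * w' →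
      u * y = u' * y ∧ x * w = x * w') ∧
    -- composition is associative: `(x*w)*t = x*(w*t)` and `w*t` witnesses the
    -- composite `y ≫ z` of `y : b → c`, `z : c → d`
    (∀ b c x y z w t : M, y = b * w → z = c * t →
      (x * w) * t = x * (w * t) ∧ y * t = b * (w * t)) ∧
    -- the element `a` is a two-sided identity morphism at `a`: for any `x : a → b`,
    -- `𝟙 a ≫ x = x` (computed with any witness) and `x ≫ 𝟙 b = x`
    (∀ a b x v u : M, x = a * v → x = u * b →
      (∀ e : M, a = e * a → e * x = x) ∧ (∀ e : M, b = b * e → x * e = x)) := by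
  refine ⟨?_, ?_, ?_, ?_⟩
  · rintro a b c x y u v w r hx hxu hy hyr
    refine ⟨by rw [hy, hxu, mul_assoc], ⟨v * w, by rw [hx, mul_assoc]⟩,
      ⟨u * r, by rw [hxu, mul_assoc, ← hy, hyr, ← mul_assoc]⟩⟩
  · rintro b x y u u' w w' hu hu' hw hw'
    constructor
    · rw [hw, ← mul_assoc, ← hu, hu', mul_assoc]
    · rw [hu, mul_assoc, ← hw, hw', ← mul_assoc, ← hu]
  · rintro b c x y z w t hy hz
    exact ⟨mul_assoc _ _ _, by rw [hy, mul_assoc]⟩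
  · rintro a b x v u hx hu
    constructor
    · intro e he; rw [hx, ← mul_assoc, ← he]
    · intro e he; rw [hu, mul_assoc, ← he]
end

section
/- For any monoid M, the pair (ℰ, ℳ) is a strict factorization system on 𝔻(M): ℰ and ℳ each contain all identity morphisms and are closed under composition, and every morphism x : a → b of 𝔻(M) factors uniquely as an ℰ-morphism followed by an ℳ-morphism, namely as the ℰ-morphism x : a → x composed with the ℳ-morphism x : x → b (uniqueness meaning: if x = e ≫ m with e : a → d in ℰ and m : d → b in ℳ, then d = x). -/
open CategoryTheory

universe u

/-- Objects of the Schützenberger category `𝔻(M)` of a monoid `M`: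
simply the elements of `M`. -/
@[ext]
structure Schutz (M : Type u) [Monoid M] : Type u where
  el : M

namespace Schutz

variable {M : Type u} [Monoid M]

/-- A morphism `a ⟶ b` in `𝔻(M)` is an element `x ∈ aM ∩ Mb`. -/
def Hom (a b : Schutz M) : Type u :=
  {x : M // (∃ v, x = a.el * v) ∧ (∃ u, x = u * b.el)}

/-- The identity morphism at `a` is the element `a` itself. -/
def hid (a : Schutz M) : Hom a a :=
  ⟨a.el, ⟨1, (mul_one _).symm⟩, ⟨1, (one_mul _).symm⟩⟩

/-- Composition of `x : a ⟶ b` and `y : b ⟶ c` : the element `x*w` where `y = b*w`. -/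
noncomputable def hcomp {a b c : Schutz M} (x : Hom a b) (y : Hom b c) : Hom a c := by
  refine ⟨x.1 * y.2.1.choose, ?_, ?_⟩
  · obtain ⟨⟨v, hv⟩, -⟩ := x.2
    exact ⟨v * y.2.1.choose, by rw [hv, mul_assoc]⟩
  · obtain ⟨-, u, hu⟩ := x.2
    obtain ⟨-, r, hr⟩ := y.2
    refine ⟨u * r, ?_⟩
    calc x.1 * y.2.1.choose = u * (b.el * y.2.1.choose) := by rw [hu, mul_assoc]
      _ = u * y.1 := by rw [← y.2.1.choose_spec]
      _ = u * r * c.el := by rw [hr, mul_assoc]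

/-- The composite is independent of the chosen witness. -/
theorem hcomp_val {a b c : Schutz M} (x : Hom a b) (y : Hom b c) {w : M}
    (hw : y.1 = b.el * w) : (hcomp x y).1 = x.1 * w := by
  obtain ⟨-, u, hu⟩ := x.2
  show x.1 * y.2.1.choose = x.1 * w
  rw [hu, mul_assoc, ← y.2.1.choose_spec, hw, ← mul_assoc]

theorem hid_hcomp {a b : Schutz M} (x : Hom a b) : hcomp (hid a) x = x := by
  apply Subtype.ext
  rw [hcomp_val (hid a) x x.2.1.choose_spec]
  exact x.2.1.choose_spec.symm

theorem hcomp_hid {a b : Schutz M} (x : Hom a b) : hcomp x (hid b) = x := by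
  apply Subtype.ext
  rw [hcomp_val x (hid b) (show (hid b).1 = b.el * 1 from (mul_one _).symm)]
  exact mul_one _

theorem hcomp_assoc {a b c d : Schutz M} (x : Hom a b) (y : Hom b c) (z : Hom c d) :
    hcomp (hcomp x y) z = hcomp x (hcomp y z) := by
  apply Subtype.ext
  have hw := y.2.1.choose_spec
  have ht := z.2.1.choose_spec
  have h1 : (hcomp y z).1 = b.el * (y.2.1.choose * z.2.1.choose) := by
    rw [hcomp_val y z ht, ← mul_assoc, ← hw]
  rw [hcomp_val (hcomp x y) z ht, hcomp_val x y hw, hcomp_val x (hcomp y z) h1, mul_assoc]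

/-- The Schützenberger category `𝔻(M)`. -/
noncomputable instance instCategory : Category.{u} (Schutz M) where
  Hom := Hom
  id := hid
  comp := hcomp
  id_comp := hid_hcomp
  comp_id := hcomp_hid
  assoc := hcomp_assoc

theorem comp_val {a b c : Schutz M} (x : a ⟶ b) (y : b ⟶ c) {w : M}
    (hw : y.1 = b.el * w) : (x ≫ y).1 = x.1 * w :=
  hcomp_val x y hw

/-- The class `ℰ` of `𝔻(M)` : morphisms `x : a ⟶ b` with `x = b`. -/
def isE {a b : Schutz M} (f : a ⟶ b) : Prop := f.1 = b.el

/-- The class `ℳ` of `𝔻(M)` : morphisms `x : a ⟶ b` with `x = a`. -/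
def isM {a b : Schutz M} (f : a ⟶ b) : Prop := f.1 = a.el

end Schutz

/-- For any monoid `M`, the pair `(ℰ, ℳ)` is a strict factorization
system on `𝔻(M)`: `ℰ` and `ℳ` each contain all identity morphisms and are closed under
composition, and every morphism `x : a ⟶ b` of `𝔻(M)` factors uniquely as an
`ℰ`-morphism followed by an `ℳ`-morphism, namely as the `ℰ`-morphism `x : a ⟶ x`
composed with the `ℳ`-morphism `x : x ⟶ b`. -/
theorem schutz_strict_factorization_system (M : Type u) [Monoid M] :
    -- `ℰ` and `ℳ` contain all identity morphisms
    (∀ a : Schutz M, Schutz.isE (𝟙 a) ∧ Schutz.isM (𝟙 a)) ∧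
    -- `ℰ` is closed under composition
    (∀ (a b c : Schutz M) (f : a ⟶ b) (g : b ⟶ c),
      Schutz.isE f → Schutz.isE g → Schutz.isE (f ≫ g)) ∧
    -- `ℳ` is closed under composition
    (∀ (a b c : Schutz M) (f : a ⟶ b) (g : b ⟶ c),
      Schutz.isM f → Schutz.isM g → Schutz.isM (f ≫ g)) ∧
    -- every morphism `x : a ⟶ b` factors as the `ℰ`-morphism `x : a ⟶ x`
    -- followed by the `ℳ`-morphism `x : x ⟶ b`
    (∀ (a b : Schutz M) (f : a ⟶ b),
      ∃ (e : a ⟶ Schutz.mk f.1) (m : Schutz.mk f.1 ⟶ b),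
        Schutz.isE e ∧ Schutz.isM m ∧ e.1 = f.1 ∧ m.1 = f.1 ∧ e ≫ m = f) ∧
    -- uniqueness: if `f = e ≫ m` with `e ∈ ℰ` and `m ∈ ℳ`, the middle object is `x`
    (∀ (a b d : Schutz M) (f : a ⟶ b) (e : a ⟶ d) (m : d ⟶ b),
      Schutz.isE e → Schutz.isM m → e ≫ m = f → d = Schutz.mk f.1) := by
  refine ⟨fun a => ⟨rfl, rfl⟩, ?_, ?_, ?_, ?_⟩
  · intro a b c f g hf hg
    obtain ⟨v, hv⟩ := g.2.1
    have h := Schutz.comp_val f g hv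
    show (f ≫ g).1 = c.el
    rw [h, hf, ← hv, hg]
  · intro a b c f g hf hg
    have h := Schutz.comp_val f g (w := 1) (by rw [mul_one, hg])
    show (f ≫ g).1 = a.el
    rw [h, mul_one, hf]
  · intro a b f
    refine ⟨⟨f.1, f.2.1, 1, (one_mul _).symm⟩, ⟨f.1, ⟨1, (mul_one _).symm⟩, f.2.2⟩,
      rfl, rfl, rfl, rfl, ?_⟩
    apply Subtype.ext
    refine (Schutz.comp_val _ _ (w := 1) ?_).trans (mul_one _)
    exact (mul_one _).symm
  · intro a b d f e m he hm hc
    have h := Schutz.comp_val e m (w := 1) (by rw [mul_one, hm])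
    rw [hc] at h
    ext
    rw [h, mul_one, he]
end

section
/- For any monoid M, the strict factorization system (ℰ, ℳ) on 𝔻(M) is complete: (a) for every ℰ-morphism e : a → b and ℳ-morphism m : a → c of 𝔻(M) there exist an object d, an ℰ-morphism e' : c → d and an ℳ-morphism m' : b → d with m ≫ e' = e ≫ m'; and (b) for every ℰ-morphism e' : c → d and ℳ-morphism m' : b → d there exist an object a, an ℰ-morphism e : a → b and an ℳ-morphism m : a → c with m ≫ e' = e ≫ m'. -/
open CategoryTheory

universe u

/-- For any monoid `M`, the strict factorization system `(ℰ, ℳ)` on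
`𝔻(M)` is complete: (a) for every `ℰ`-morphism `e : a ⟶ b` and `ℳ`-morphism
`m : a ⟶ c` there exist an object `d`, an `ℰ`-morphism `e' : c ⟶ d` and an
`ℳ`-morphism `m' : b ⟶ d` with `m ≫ e' = e ≫ m'`; and (b) dually. -/
theorem schutz_sfs_complete (M : Type u) [Monoid M] :
    (∀ (a b c : Schutz M) (e : a ⟶ b) (m : a ⟶ c), Schutz.isE e → Schutz.isM m →
      ∃ (d : Schutz M) (e' : c ⟶ d) (m' : b ⟶ d),
        Schutz.isE e' ∧ Schutz.isM m' ∧ m ≫ e' = e ≫ m') ∧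
    (∀ (b c d : Schutz M) (e' : c ⟶ d) (m' : b ⟶ d), Schutz.isE e' → Schutz.isM m' →
      ∃ (a : Schutz M) (e : a ⟶ b) (m : a ⟶ c),
        Schutz.isE e ∧ Schutz.isM m ∧ m ≫ e' = e ≫ m') := by
  constructor
  · rintro a b c e m he hm
    obtain ⟨⟨v, hv⟩, -⟩ := e.2
    obtain ⟨-, u, hu⟩ := m.2
    rw [he] at hv
    rw [hm] at hu
    refine ⟨⟨c.el * v⟩,
      ⟨c.el * v, ⟨v, rfl⟩, ⟨1, (one_mul _).symm⟩⟩,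
      ⟨b.el, ⟨1, (mul_one _).symm⟩, ⟨u, show b.el = u * (c.el * v) by rw [← mul_assoc, ← hu, ← hv]⟩⟩,
      rfl, rfl, ?_⟩
    apply Subtype.ext
    have h1 := Schutz.comp_val m ⟨c.el * v, ⟨v, rfl⟩, ⟨1, (one_mul _).symm⟩⟩
      (rfl : c.el * v = c.el * v)
    have h2 := Schutz.comp_val e
      ⟨b.el, ⟨1, (mul_one _).symm⟩, ⟨u, show b.el = u * (c.el * v) by rw [← mul_assoc, ← hu, ← hv]⟩⟩
      ((mul_one b.el).symm : b.el = b.el * 1)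
    rw [h1, h2, mul_one, show m.1 = a.el from hm, show e.1 = b.el from he, hv]
  · rintro b c d e' m' he' hm'
    obtain ⟨⟨v, hv⟩, -⟩ := e'.2
    obtain ⟨-, u, hu⟩ := m'.2
    rw [he'] at hv
    rw [hm'] at hu
    refine ⟨⟨u * c.el⟩,
      ⟨b.el, ⟨v, show b.el = u * c.el * v by rw [hu, hv, ← mul_assoc]⟩, ⟨1, (one_mul _).symm⟩⟩,
      ⟨u * c.el, ⟨1, (mul_one _).symm⟩, ⟨u, rfl⟩⟩,
      rfl, rfl, ?_⟩
    apply Subtype.ext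
    have h1 := Schutz.comp_val (⟨u * c.el, ⟨1, (mul_one _).symm⟩, ⟨u, rfl⟩⟩ :
        (⟨u * c.el⟩ : Schutz M) ⟶ c) e'
      ((show e'.1 = d.el from he').trans hv)
    have h2 := Schutz.comp_val (⟨b.el, ⟨v, show b.el = u * c.el * v by rw [hu, hv, ← mul_assoc]⟩,
        ⟨1, (one_mul _).symm⟩⟩ : (⟨u * c.el⟩ : Schutz M) ⟶ b) m'
      ((show m'.1 = b.el from hm').trans (mul_one b.el).symm)
    rw [h1, h2]
    show u * c.el * v = b.el * 1
    rw [mul_one, mul_assoc, ← hv]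
    exact hu.symm
end

section
/- If (ℰ, ℳ) is a thin strict factorization system on a small category C, then every morphism in ℰ is an epimorphism of C and every morphism in ℳ is a monomorphism of C. -/
open CategoryTheory

universe v u

/-- A strict factorization system `(ℰ, ℳ)` on a category `C`: two classes of
morphisms, each containing identities and closed under composition, such that
every morphism factors uniquely as an `ℰ`-morphism followed by an `ℳ`-morphism. -/
structure SFS (C : Type u) [Category.{v} C] where
  E : ∀ ⦃X Y : C⦄, (X ⟶ Y) → Prop
  M : ∀ ⦃X Y : C⦄, (X ⟶ Y) → Prop
  E_id : ∀ X : C, E (𝟙 X)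
  M_id : ∀ X : C, M (𝟙 X)
  E_comp : ∀ ⦃X Y Z : C⦄ (f : X ⟶ Y) (g : Y ⟶ Z), E f → E g → E (f ≫ g)
  M_comp : ∀ ⦃X Y Z : C⦄ (f : X ⟶ Y) (g : Y ⟶ Z), M f → M g → M (f ≫ g)
  fact : ∀ ⦃X Y : C⦄ (f : X ⟶ Y),
    ∃! p : Σ d : C, (X ⟶ d) × (d ⟶ Y), E p.2.1 ∧ M p.2.2 ∧ p.2.1 ≫ p.2.2 = f

namespace SFS

variable {C : Type u} [Category.{v} C] (S : SFS C)

/-- The SFS is thin: at most one `ℰ`-morphism and at most one `ℳ`-morphism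
between any two objects. -/
def Thin : Prop :=
  (∀ ⦃X Y : C⦄ (f g : X ⟶ Y), S.E f → S.E g → f = g) ∧
  (∀ ⦃X Y : C⦄ (f g : X ⟶ Y), S.M f → S.M g → f = g)

/-- The SFS is unital at `ζ`: for every object `a` there is exactly one
`ℰ`-morphism `ζ ⟶ a` and exactly one `ℳ`-morphism `a ⟶ ζ`. -/
def UnitalAt (ζ : C) : Prop :=
  (∀ a : C, ∃! e : ζ ⟶ a, S.E e) ∧ (∀ a : C, ∃! m : a ⟶ ζ, S.M m)

/-- The SFS is complete: both square-filling conditions. -/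
def Complete : Prop :=
  (∀ ⦃a b c : C⦄ (e : a ⟶ b) (m : a ⟶ c), S.E e → S.M m →
    ∃ (d : C) (e' : c ⟶ d) (m' : b ⟶ d), S.E e' ∧ S.M m' ∧ m ≫ e' = e ≫ m') ∧
  (∀ ⦃b c d : C⦄ (e' : c ⟶ d) (m' : b ⟶ d), S.E e' → S.M m' →
    ∃ (a : C) (e : a ⟶ b) (m : a ⟶ c), S.E e ∧ S.M m ∧ m ≫ e' = e ≫ m')

/-- The middle object of the unique `(ℰ, ℳ)`-factorization of `f`. -/
noncomputable def mid ⦃X Y : C⦄ (f : X ⟶ Y) : C :=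
  (S.fact f).exists.choose.1

/-- The unique `ℰ`-morphism `ζ ⟶ a` (`e_a`) of an SFS unital at `ζ`. -/
noncomputable def eU {ζ : C} (h : S.UnitalAt ζ) (a : C) : ζ ⟶ a :=
  (h.1 a).exists.choose

/-- The unique `ℳ`-morphism `a ⟶ ζ` (`m_a`) of an SFS unital at `ζ`. -/
noncomputable def mU {ζ : C} (h : S.UnitalAt ζ) (a : C) : a ⟶ ζ :=
  (h.2 a).exists.choose

/-- The induced operation on objects: `a ∗ b` is the middle object of the
unique `(ℰ, ℳ)`-factorization of `m_a ≫ e_b : a ⟶ b`. -/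
noncomputable def star {ζ : C} (h : S.UnitalAt ζ) (a b : C) : C :=
  S.mid (S.mU h a ≫ S.eU h b)

end SFS

/-- If `(ℰ, ℳ)` is a thin strict factorization system on a small
category `C`, then every morphism in `ℰ` is an epimorphism of `C` and every morphism
in `ℳ` is a monomorphism of `C`. -/
theorem thin_sfs_epi_monic {C : Type u} [SmallCategory C] (S : SFS C) (hT : S.Thin) :
    (∀ (X Y : C) (f : X ⟶ Y), S.E f → Epi f) ∧
    (∀ (X Y : C) (f : X ⟶ Y), S.M f → Mono f) := by
  constructor
  · intro X Y e hE
    constructor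
    intro Z g h hgh
    obtain ⟨⟨d, eg, mg⟩, ⟨hEg, hMg, hcg⟩, -⟩ := S.fact g
    obtain ⟨⟨d', eh, mh⟩, ⟨hEh, hMh, hch⟩, -⟩ := S.fact h
    obtain ⟨u, -, huniq⟩ := S.fact (e ≫ g)
    have h1 : (⟨d, e ≫ eg, mg⟩ : Σ c : C, (X ⟶ c) × (c ⟶ Z)) = u :=
      huniq _ ⟨S.E_comp _ _ hE hEg, hMg, by rw [Category.assoc, hcg]⟩
    have h2 : (⟨d', e ≫ eh, mh⟩ : Σ c : C, (X ⟶ c) × (c ⟶ Z)) = u :=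
      huniq _ ⟨S.E_comp _ _ hE hEh, hMh, by rw [Category.assoc, hch, hgh]⟩
    have hd : d = d' := congrArg Sigma.fst (h1.trans h2.symm)
    subst hd
    rw [← hcg, ← hch, hT.1 eg eh hEg hEh, hT.2 mg mh hMg hMh]
  · intro X Y m hM
    constructor
    intro Z g h hgh
    obtain ⟨⟨d, eg, mg⟩, ⟨hEg, hMg, hcg⟩, -⟩ := S.fact g
    obtain ⟨⟨d', eh, mh⟩, ⟨hEh, hMh, hch⟩, -⟩ := S.fact h
    obtain ⟨u, -, huniq⟩ := S.fact (g ≫ m)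
    have h1 : (⟨d, eg, mg ≫ m⟩ : Σ c : C, (Z ⟶ c) × (c ⟶ Y)) = u :=
      huniq _ ⟨hEg, S.M_comp _ _ hMg hM, by rw [← Category.assoc, hcg]⟩
    have h2 : (⟨d', eh, mh ≫ m⟩ : Σ c : C, (Z ⟶ c) × (c ⟶ Y)) = u :=
      huniq _ ⟨hEh, S.M_comp _ _ hMh hM, by rw [← Category.assoc, hch, hgh]⟩
    have hd : d = d' := congrArg Sigma.fst (h1.trans h2.symm)
    subst hd
    rw [← hcg, ← hch, hT.1 eg eh hEg hEh, hT.2 mg mh hMg hMh]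
end

section
/- Let (ℰ, ℳ) be a thin SFS on a small category C, unital at ζ. Then (ℰ, ℳ) is complete if and only if the following two conditions hold: (P1) for every ℰ-morphism e : a → x there exists an ℳ-morphism m' : x → u such that m_a ≫ e_u = e ≫ m' (where m_a : a → ζ and e_u : ζ → u are the unique unit maps); and (P2) for every ℳ-morphism m' : x → b there exists an ℰ-morphism e : v → x such that m_v ≫ e_b = e ≫ m'. -/
open CategoryTheory

universe v u

namespace SFS

variable {C : Type u} [Category.{v} C] (S : SFS C)

lemma eU_E {ζ : C} (h : S.UnitalAt ζ) (a : C) : S.E (S.eU h a) :=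
  (h.1 a).exists.choose_spec

lemma mU_M {ζ : C} (h : S.UnitalAt ζ) (a : C) : S.M (S.mU h a) :=
  (h.2 a).exists.choose_spec

end SFS

/-- Let `(ℰ, ℳ)` be a thin SFS on a small category `C`, unital at `ζ`.
Then `(ℰ, ℳ)` is complete iff: (P1) for every `ℰ`-morphism `e : a ⟶ x` there exists an
`ℳ`-morphism `m' : x ⟶ u` such that `m_a ≫ e_u = e ≫ m'`; and (P2) for every
`ℳ`-morphism `m' : x ⟶ b` there exists an `ℰ`-morphism `e : v ⟶ x` such that
`m_v ≫ e_b = e ≫ m'`. -/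
theorem complete_iff_unit_squares {C : Type u} [SmallCategory C] (S : SFS C)
    (hT : S.Thin) (ζ : C) (hU : S.UnitalAt ζ) :
    S.Complete ↔
      ((∀ (a x : C) (e : a ⟶ x), S.E e →
          ∃ (u : C) (m' : x ⟶ u), S.M m' ∧ S.mU hU a ≫ S.eU hU u = e ≫ m') ∧
       (∀ (x b : C) (m' : x ⟶ b), S.M m' →
          ∃ (v : C) (e : v ⟶ x), S.E e ∧ S.mU hU v ≫ S.eU hU b = e ≫ m')) := by
  constructor
  · rintro ⟨h1, h2⟩
    constructor
    · intro a x e he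
      obtain ⟨d, e', m', hE', hM', hsq⟩ := h1 e (S.mU hU a) he (S.mU_M hU a)
      have he' : e' = S.eU hU d := (hU.1 d).unique hE' (S.eU_E hU d)
      exact ⟨d, m', hM', by rw [← he']; exact hsq⟩
    · intro x b m' hm'
      obtain ⟨v, e, m, hE, hM, hsq⟩ := h2 (S.eU hU b) m' (S.eU_E hU b) hm'
      have hm : m = S.mU hU v := (hU.2 v).unique hM (S.mU_M hU v)
      exact ⟨v, e, hE, by rw [← hm]; exact hsq⟩
  · rintro ⟨P1, P2⟩
    constructor
    · intro a b c e m he hm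
      obtain ⟨u, m', hm', hu⟩ := P1 a b e he
      obtain ⟨⟨cu, e₂, m₂⟩, ⟨hE₂, hM₂, hf₂⟩, -⟩ := S.fact (S.mU hU c ≫ S.eU hU u)
      obtain ⟨⟨w, e₃, m₃⟩, ⟨hE₃, hM₃, hf₃⟩, -⟩ := S.fact (m ≫ e₂)
      have hmc : m ≫ S.mU hU c = S.mU hU a :=
        (hU.2 a).unique (S.M_comp _ _ hm (S.mU_M hU c)) (S.mU_M hU a)
      have key : e₃ ≫ m₃ ≫ m₂ = e ≫ m' := by
        calc e₃ ≫ m₃ ≫ m₂ = (m ≫ e₂) ≫ m₂ := by rw [← Category.assoc, hf₃]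
          _ = m ≫ S.mU hU c ≫ S.eU hU u := by rw [Category.assoc, hf₂]
          _ = S.mU hU a ≫ S.eU hU u := by rw [← Category.assoc, hmc]
          _ = e ≫ m' := hu
      have uniq : (⟨w, e₃, m₃ ≫ m₂⟩ : Σ d : C, (a ⟶ d) × (d ⟶ u)) = ⟨b, e, m'⟩ :=
        (S.fact (e ≫ m')).unique (y₁ := ⟨w, e₃, m₃ ≫ m₂⟩) (y₂ := ⟨b, e, m'⟩)
          ⟨hE₃, S.M_comp _ _ hM₃ hM₂, key⟩ ⟨he, hm', rfl⟩
      have hw : w = b := congrArg Sigma.fst uniq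
      subst hw
      obtain ⟨he₃, -⟩ : e₃ = e ∧ m₃ ≫ m₂ = m' := by
        simpa using uniq
      exact ⟨cu, e₂, m₃, hE₂, hM₃, by rw [← hf₃, he₃]⟩
    · intro b c d e' m' he' hm'
      obtain ⟨v, e, he, hv⟩ := P2 b d m' hm'
      obtain ⟨⟨vc, e₄, m₄⟩, ⟨hE₄, hM₄, hf₄⟩, -⟩ := S.fact (S.mU hU v ≫ S.eU hU c)
      obtain ⟨⟨w, e₅, m₅⟩, ⟨hE₅, hM₅, hf₅⟩, -⟩ := S.fact (m₄ ≫ e')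
      have hc : S.eU hU c ≫ e' = S.eU hU d :=
        (hU.1 d).unique (S.E_comp _ _ (S.eU_E hU c) he') (S.eU_E hU d)
      have key : (e₄ ≫ e₅) ≫ m₅ = e ≫ m' := by
        calc (e₄ ≫ e₅) ≫ m₅ = e₄ ≫ (m₄ ≫ e') := by rw [Category.assoc, hf₅]
          _ = (S.mU hU v ≫ S.eU hU c) ≫ e' := by rw [← Category.assoc, hf₄]
          _ = S.mU hU v ≫ S.eU hU d := by rw [Category.assoc, hc]
          _ = e ≫ m' := hv
      have uniq : (⟨w, e₄ ≫ e₅, m₅⟩ : Σ a' : C, (v ⟶ a') × (a' ⟶ d)) = ⟨b, e, m'⟩ :=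
        (S.fact (e ≫ m')).unique (y₁ := ⟨w, e₄ ≫ e₅, m₅⟩) (y₂ := ⟨b, e, m'⟩)
          ⟨S.E_comp _ _ hE₄ hE₅, hM₅, key⟩ ⟨he, hm', rfl⟩
      have hw : w = b := congrArg Sigma.fst uniq
      subst hw
      obtain ⟨-, hm₅⟩ : e₄ ≫ e₅ = e ∧ m₅ = m' := by
        simpa using uniq
      exact ⟨vc, e₅, m₄, hE₅, hM₄, by rw [← hm₅, ← hf₅]⟩
end

section
/- Let C be a small category with a thin, complete SFS (ℰ, ℳ) unital at ζ, and let ∗ be the induced binary operation on objects. Then ∗ is associative and ζ is a two-sided identity for ∗; that is, the objects of C form a monoid (Ob C, ∗, ζ). -/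
open CategoryTheory

universe v u

namespace SFS

variable {C : Type u} [Category.{v} C] (S : SFS C)

/-- The `ℰ`-part of the chosen factorization of `f`. -/
noncomputable def emid ⦃X Y : C⦄ (f : X ⟶ Y) : X ⟶ S.mid f :=
  (S.fact f).exists.choose.2.1

/-- The `ℳ`-part of the chosen factorization of `f`. -/
noncomputable def mmid ⦃X Y : C⦄ (f : X ⟶ Y) : S.mid f ⟶ Y :=
  (S.fact f).exists.choose.2.2

lemma emid_E ⦃X Y : C⦄ (f : X ⟶ Y) : S.E (S.emid f) :=
  (S.fact f).exists.choose_spec.1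

lemma mmid_M ⦃X Y : C⦄ (f : X ⟶ Y) : S.M (S.mmid f) :=
  (S.fact f).exists.choose_spec.2.1

lemma mid_fac ⦃X Y : C⦄ (f : X ⟶ Y) : S.emid f ≫ S.mmid f = f :=
  (S.fact f).exists.choose_spec.2.2

lemma mid_eq ⦃X Y : C⦄ (f : X ⟶ Y) (d : C) (e : X ⟶ d) (m : d ⟶ Y)
    (hE : S.E e) (hM : S.M m) (hc : e ≫ m = f) : S.mid f = d := by
  have h : (S.fact f).exists.choose = ⟨d, e, m⟩ :=
    (S.fact f).unique (S.fact f).exists.choose_spec ⟨hE, hM, hc⟩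
  exact congrArg Sigma.fst h

end SFS

/-- Let `C` be a small category with a thin, complete SFS `(ℰ, ℳ)`
unital at `ζ`, and let `∗` be the induced binary operation on objects. Then `∗` is
associative and `ζ` is a two-sided identity for `∗`; that is, the objects of `C` form
a monoid `(Ob C, ∗, ζ)`. -/
theorem star_is_monoid {C : Type u} [SmallCategory C] (S : SFS C)
    (hT : S.Thin) (ζ : C) (hU : S.UnitalAt ζ) (hC : S.Complete) :
    (∀ a b c : C, S.star hU (S.star hU a b) c = S.star hU a (S.star hU b c)) ∧
    (∀ a : C, S.star hU ζ a = a) ∧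
    (∀ a : C, S.star hU a ζ = a) := by
  have heζ : S.eU hU ζ = 𝟙 ζ := (hU.1 ζ).unique (S.eU_E hU ζ) (S.E_id ζ)
  have hmζ : S.mU hU ζ = 𝟙 ζ := (hU.2 ζ).unique (S.mU_M hU ζ) (S.M_id ζ)
  refine ⟨?_, ?_, ?_⟩
  · intro a b c
    set f := S.mU hU a ≫ S.eU hU b with hf
    set g := S.mU hU b ≫ S.eU hU c with hg
    set x := S.mid f
    set y := S.mid g
    set t := S.mmid f ≫ S.emid g with ht
    -- m_x = m₁ ≫ m_b
    have hmx : S.mU hU x = S.mmid f ≫ S.mU hU b :=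
      (hU.2 x).unique (S.mU_M hU x)
        (S.M_comp _ _ (S.mmid_M f) (S.mU_M hU b))
    -- e_y = e_b ≫ e₂
    have hey : S.eU hU y = S.eU hU b ≫ S.emid g :=
      (hU.1 y).unique (S.eU_E hU y)
        (S.E_comp _ _ (S.eU_E hU b) (S.emid_E g))
    have hL : S.star hU x c = S.mid t := by
      show S.mid (S.mU hU x ≫ S.eU hU c) = S.mid t
      refine S.mid_eq _ _ (S.emid t) (S.mmid t ≫ S.mmid g) (S.emid_E t)
        (S.M_comp _ _ (S.mmid_M t) (S.mmid_M g)) ?_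
      rw [← Category.assoc, S.mid_fac t, ht, Category.assoc, S.mid_fac g,
        hmx, hg, Category.assoc]
    have hR : S.star hU a y = S.mid t := by
      show S.mid (S.mU hU a ≫ S.eU hU y) = S.mid t
      refine S.mid_eq _ _ (S.emid f ≫ S.emid t) (S.mmid t)
        (S.E_comp _ _ (S.emid_E f) (S.emid_E t)) (S.mmid_M t) ?_
      rw [Category.assoc, S.mid_fac t, ht, ← Category.assoc, S.mid_fac f,
        hey, hf, ← Category.assoc]
    exact hL.trans hR.symm
  · intro a
    show S.mid (S.mU hU ζ ≫ S.eU hU a) = a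
    refine S.mid_eq _ a (S.eU hU a) (𝟙 a) (S.eU_E hU a) (S.M_id a) ?_
    rw [hmζ, Category.id_comp, Category.comp_id]
  · intro a
    show S.mid (S.mU hU a ≫ S.eU hU ζ) = a
    refine S.mid_eq _ a (𝟙 a) (S.mU hU a) (S.E_id a) (S.mU_M hU a) ?_
    rw [heζ, Category.id_comp, Category.comp_id]
end

section
/- Let C be a small category with a thin, complete SFS (ℰ, ℳ) unital at ζ, and let ∗ be the induced binary operation on objects. The map φ sending an object x to the endomorphism e_x ≫ m_x : ζ → ζ (the unique ℰ-morphism ζ → x followed by the unique ℳ-morphism x → ζ) is a monoid isomorphism from (Ob C, ∗, ζ) to the endomorphism monoid C(ζ, ζ) with diagrammatic composition: φ is bijective, φ(ζ) = id_ζ, and φ(x ∗ y) = φ(x) ≫ φ(y) for all objects x, y. -/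
open CategoryTheory

universe v u

/-- Let `C` be a small category with a thin, complete SFS `(ℰ, ℳ)`
unital at `ζ`, with induced operation `∗`. The map `φ` sending an object `x` to the
endomorphism `e_x ≫ m_x : ζ ⟶ ζ` is a monoid isomorphism from `(Ob C, ∗, ζ)` to the
endomorphism monoid `C(ζ, ζ)`: `φ` is bijective, `φ(ζ) = 𝟙 ζ`, and
`φ(x ∗ y) = φ(x) ≫ φ(y)`. -/
theorem objects_iso_endomorphism_monoid {C : Type u} [SmallCategory C] (S : SFS C)
    (hT : S.Thin) (ζ : C) (hU : S.UnitalAt ζ) (hC : S.Complete) :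
    Function.Bijective (fun x : C => S.eU hU x ≫ S.mU hU x) ∧
    (S.eU hU ζ ≫ S.mU hU ζ = 𝟙 ζ) ∧
    (∀ x y : C, S.eU hU (S.star hU x y) ≫ S.mU hU (S.star hU x y) =
      (S.eU hU x ≫ S.mU hU x) ≫ (S.eU hU y ≫ S.mU hU y)) := by
  have heU : ∀ a : C, S.E (S.eU hU a) := fun a => (hU.1 a).exists.choose_spec
  have hmU : ∀ a : C, S.M (S.mU hU a) := fun a => (hU.2 a).exists.choose_spec
  have heU' : ∀ (a : C) (e : ζ ⟶ a), S.E e → e = S.eU hU a :=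
    fun a e he => (hU.1 a).unique he (heU a)
  have hmU' : ∀ (a : C) (m : a ⟶ ζ), S.M m → m = S.mU hU a :=
    fun a m hm => (hU.2 a).unique hm (hmU a)
  refine ⟨⟨?_, ?_⟩, ?_, ?_⟩
  · intro x y hxy
    simp only at hxy
    have hx : S.E (S.eU hU x) ∧ S.M (S.mU hU x) ∧
        (S.eU hU x) ≫ (S.mU hU x) = S.eU hU x ≫ S.mU hU x := ⟨heU x, hmU x, rfl⟩
    have hy : S.E (S.eU hU y) ∧ S.M (S.mU hU y) ∧
        (S.eU hU y) ≫ (S.mU hU y) = S.eU hU x ≫ S.mU hU x := ⟨heU y, hmU y, hxy.symm⟩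
    have := (S.fact (S.eU hU x ≫ S.mU hU x)).unique
      (y₁ := ⟨x, S.eU hU x, S.mU hU x⟩) (y₂ := ⟨y, S.eU hU y, S.mU hU y⟩) hx hy
    exact congrArg Sigma.fst this
  · intro f
    obtain ⟨⟨d, e, m⟩, he, hm, hcomp⟩ := (S.fact f).exists
    refine ⟨d, ?_⟩
    simp only
    rw [← heU' d e he, ← hmU' d m hm]
    exact hcomp
  · have h1 : 𝟙 ζ = S.eU hU ζ := heU' ζ (𝟙 ζ) (S.E_id ζ)
    have h2 : 𝟙 ζ = S.mU hU ζ := hmU' ζ (𝟙 ζ) (S.M_id ζ)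
    rw [← h1, ← h2, Category.comp_id]
  · intro x y
    obtain ⟨he', hm', hcomp⟩ :=
      (S.fact (S.mU hU x ≫ S.eU hU y)).exists.choose_spec
    set p := (S.fact (S.mU hU x ≫ S.eU hU y)).exists.choose with hp
    have hstar : S.star hU x y = p.1 := rfl
    have he1 : S.eU hU (S.star hU x y) = S.eU hU x ≫ p.2.1 :=
      (heU' _ _ (S.E_comp _ _ (heU x) he')).symm
    have hm1 : S.mU hU (S.star hU x y) = p.2.2 ≫ S.mU hU y :=
      (hmU' _ _ (S.M_comp _ _ hm' (hmU y))).symm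
    rw [he1, hm1]
    change (S.eU hU x ≫ p.2.1) ≫ p.2.2 ≫ S.mU hU y = _
    simp only [Category.assoc]
    rw [← Category.assoc p.2.1, hcomp]
    simp
end

section
/- Let C be a small category with a thin, complete SFS (ℰ, ℳ) unital at ζ, let ∗ be the induced operation making (Ob C, ∗, ζ) a monoid, and let 𝔻(Ob C, ∗, ζ) be its Schützenberger category. Then the assignment that is the identity on objects and sends each morphism x : a → b of 𝔻(Ob C, ∗, ζ) to the composite (unique ℰ-morphism a → x) ≫ (unique ℳ-morphism x → b) in C is a well-defined functor, maps ℰ-morphisms to ℰ-morphisms and ℳ-morphisms to ℳ-morphisms, and is an isomorphism of categories (its inverse sends a morphism of C with factorization a ⟶(ℰ) x ⟶(ℳ) b to the morphism x : a → b of 𝔻(Ob C, ∗, ζ)). -/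
open CategoryTheory

universe v u

namespace SFSAux

variable {C : Type u} [SmallCategory C] (S : SFS C)

/-- The `ℰ`-part of the chosen factorization of `f`. -/
noncomputable def fe ⦃X Y : C⦄ (f : X ⟶ Y) : X ⟶ S.mid f :=
  (S.fact f).exists.choose.2.1

/-- The `ℳ`-part of the chosen factorization of `f`. -/
noncomputable def fm ⦃X Y : C⦄ (f : X ⟶ Y) : S.mid f ⟶ Y :=
  (S.fact f).exists.choose.2.2

lemma fe_E ⦃X Y : C⦄ (f : X ⟶ Y) : S.E (fe S f) :=
  (S.fact f).exists.choose_spec.1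

lemma fm_M ⦃X Y : C⦄ (f : X ⟶ Y) : S.M (fm S f) :=
  (S.fact f).exists.choose_spec.2.1

lemma fe_fm ⦃X Y : C⦄ (f : X ⟶ Y) : fe S f ≫ fm S f = f :=
  (S.fact f).exists.choose_spec.2.2

lemma mid_unique ⦃X Y : C⦄ {f : X ⟶ Y} {d : C} (e : X ⟶ d) (m : d ⟶ Y)
    (he : S.E e) (hm : S.M m) (hc : e ≫ m = f) : d = S.mid f := by
  have h1 : (⟨d, e, m⟩ : Σ d : C, (X ⟶ d) × (d ⟶ Y)) =
      ⟨S.mid f, fe S f, fm S f⟩ :=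
    (S.fact f).unique ⟨he, hm, hc⟩ ⟨fe_E S f, fm_M S f, fe_fm S f⟩
  exact congrArg Sigma.fst h1

lemma E_comp_eqToHom {X Y Z : C} (e : X ⟶ Y) (h : Y = Z) (he : S.E e) :
    S.E (e ≫ eqToHom h) := by subst h; simpa using he

lemma M_eqToHom_comp {X Y Z : C} (h : X = Y) (m : Y ⟶ Z) (hm : S.M m) :
    S.M (eqToHom h ≫ m) := by subst h; simpa using hm

variable {ζ : C} [Monoid C]

section
variable (hT : S.Thin) (hU : S.UnitalAt ζ) (hmul : ∀ a b : C, a * b = S.star hU a b)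
  (hC : S.Complete)
include hU

lemma eU_E (a : C) : S.E (S.eU hU a) := (hU.1 a).exists.choose_spec

lemma mU_M (a : C) : S.M (S.mU hU a) := (hU.2 a).exists.choose_spec

lemma E_from_zeta {a : C} (e : ζ ⟶ a) (he : S.E e) : e = S.eU hU a :=
  (hU.1 a).unique he (eU_E S hU a)

lemma M_to_zeta {a : C} (m : a ⟶ ζ) (hm : S.M m) : m = S.mU hU a :=
  (hU.2 a).unique hm (mU_M S hU a)

lemma star_def (a b : C) : S.star hU a b = S.mid (S.mU hU a ≫ S.eU hU b) := rfl

include hmul in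
lemma mul_def (a b : C) : a * b = S.mid (S.mU hU a ≫ S.eU hU b) := hmul a b

include hmul in
lemma exists_eArr {a x : C} (h : ∃ v, x = a * v) : ∃ e : a ⟶ x, S.E e := by
  obtain ⟨v, hv⟩ := h
  rw [mul_def S hU hmul] at hv
  exact ⟨fe S _ ≫ eqToHom hv.symm, E_comp_eqToHom S _ _ (fe_E S _)⟩

include hmul in
lemma exists_mArr {x b : C} (h : ∃ u, x = u * b) : ∃ m : x ⟶ b, S.M m := by
  obtain ⟨u, hu⟩ := h
  rw [mul_def S hU hmul] at hu
  exact ⟨eqToHom hu ≫ fm S _, M_eqToHom_comp S _ _ (fm_M S _)⟩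

include hmul in
noncomputable def eArr {a x : C} (h : ∃ v, x = a * v) : a ⟶ x :=
  (exists_eArr S hU hmul h).choose

include hmul in
lemma eArr_E {a x : C} (h : ∃ v, x = a * v) : S.E (eArr S hU hmul h) :=
  (exists_eArr S hU hmul h).choose_spec

include hmul in
noncomputable def mArr {x b : C} (h : ∃ u, x = u * b) : x ⟶ b :=
  (exists_mArr S hU hmul h).choose

include hmul in
lemma mArr_M {x b : C} (h : ∃ u, x = u * b) : S.M (mArr S hU hmul h) :=
  (exists_mArr S hU hmul h).choose_spec

include hmul hC in
lemma mul_of_E {a x : C} (e : a ⟶ x) (he : S.E e) : ∃ v, x = a * v := by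
  obtain ⟨d, e', m', he', hm', hsq⟩ := hC.1 e (S.mU hU a) he (mU_M S hU a)
  refine ⟨d, ?_⟩
  rw [mul_def S hU hmul]
  exact mid_unique S e m' he hm'
    (by rw [← hsq, E_from_zeta S hU e' he'])

include hmul hC in
lemma mul_of_M {x b : C} (m : x ⟶ b) (hm : S.M m) : ∃ u, x = u * b := by
  obtain ⟨a, e, m'', he, hm'', hsq⟩ := hC.2 (S.eU hU b) m (eU_E S hU b) hm
  refine ⟨a, ?_⟩
  rw [mul_def S hU hmul]
  exact mid_unique S e m he hm
    (by rw [← hsq, M_to_zeta S hU m'' hm''])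

include hT hmul in
lemma mid_McompE {x b y w : C} (mxb : x ⟶ b) (hm : S.M mxb)
    (eby : b ⟶ y) (he : S.E eby) (hw : y = b * w) :
    S.mid (mxb ≫ eby) = x * w := by
  rw [mul_def S hU hmul] at hw
  set g := S.mU hU b ≫ S.eU hU w with hg
  have hbar : (fe S g ≫ eqToHom hw.symm) ≫ (eqToHom hw ≫ fm S g) = g := by
    simp [fe_fm]
  have heby : eby = fe S g ≫ eqToHom hw.symm :=
    hT.1 _ _ he (E_comp_eqToHom S _ _ (fe_E S g))
  have hx : mxb ≫ S.mU hU b = S.mU hU x :=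
    M_to_zeta S hU _ (S.M_comp _ _ hm (mU_M S hU b))
  have hbig : (mxb ≫ eby) ≫ (eqToHom hw ≫ fm S g) = S.mU hU x ≫ S.eU hU w := by
    rw [heby]
    calc (mxb ≫ fe S g ≫ eqToHom hw.symm) ≫ (eqToHom hw ≫ fm S g)
        = mxb ≫ ((fe S g ≫ eqToHom hw.symm) ≫ (eqToHom hw ≫ fm S g)) := by
          simp only [Category.assoc]
      _ = mxb ≫ g := by rw [hbar]
      _ = (mxb ≫ S.mU hU b) ≫ S.eU hU w := by rw [hg]; simp only [Category.assoc]
      _ = S.mU hU x ≫ S.eU hU w := by rw [hx]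
  rw [mul_def S hU hmul]
  exact mid_unique S (fe S (mxb ≫ eby))
    (fm S (mxb ≫ eby) ≫ (eqToHom hw ≫ fm S g))
    (fe_E S _)
    (S.M_comp _ _ (fm_M S _) (M_eqToHom_comp S _ _ (fm_M S g)))
    (by rw [← Category.assoc, fe_fm, hbig])

include hT hmul in
lemma mid_comp {X Y Z : C} (g : X ⟶ Y) (h : Y ⟶ Z) {w : C}
    (hw : S.mid h = Y * w) : S.mid (g ≫ h) = S.mid g * w := by
  have ht : S.mid (fm S g ≫ fe S h) = S.mid g * w :=
    mid_McompE S hT hU hmul (fm S g) (fm_M S g) (fe S h) (fe_E S h) hw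
  refine (mid_unique S (fe S g ≫ fe S (fm S g ≫ fe S h) ≫ eqToHom ht)
    ((eqToHom ht.symm ≫ fm S (fm S g ≫ fe S h)) ≫ fm S h) ?_ ?_ ?_).symm
  · exact S.E_comp _ _ (fe_E S g) (E_comp_eqToHom S _ _ (fe_E S _))
  · exact S.M_comp _ _ (M_eqToHom_comp S _ _ (fm_M S _)) (fm_M S h)
  · calc (fe S g ≫ fe S (fm S g ≫ fe S h) ≫ eqToHom ht) ≫
        ((eqToHom ht.symm ≫ fm S (fm S g ≫ fe S h)) ≫ fm S h)
        = fe S g ≫ (fe S (fm S g ≫ fe S h) ≫ fm S (fm S g ≫ fe S h)) ≫ fm S h := by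
          simp only [Category.assoc, eqToHom_trans_assoc, eqToHom_refl, Category.id_comp]
      _ = fe S g ≫ (fm S g ≫ fe S h) ≫ fm S h := by rw [fe_fm]
      _ = (fe S g ≫ fm S g) ≫ (fe S h ≫ fm S h) := by simp only [Category.assoc]
      _ = g ≫ h := by rw [fe_fm, fe_fm]

end

end SFSAux

namespace SFSAux

variable {C : Type u} [SmallCategory C] [Monoid C] (S : SFS C) {ζ : C}

lemma E_eqToHom {X Y : C} (h : X = Y) : S.E (eqToHom h) := by
  subst h; simpa using S.E_id X

lemma M_eqToHom {X Y : C} (h : X = Y) : S.M (eqToHom h) := by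
  subst h; simpa using S.M_id X

variable (hT : S.Thin) (hU : S.UnitalAt ζ)
  (hmul : ∀ a b : C, a * b = S.star hU a b) (hC : S.Complete)

/-- The functor `𝔻(Ob C) ⥤ C`. -/
noncomputable def Ffun : Schutz C ⥤ C where
  obj X := X.el
  map {a b} f := eArr S hU hmul f.2.1 ≫ mArr S hU hmul f.2.2
  map_id a := by
    have h1 : eArr S hU hmul (𝟙 a : a ⟶ a).2.1 = 𝟙 a.el :=
      hT.1 _ _ (eArr_E S hU hmul _) (S.E_id a.el)
    have h2 : mArr S hU hmul (𝟙 a : a ⟶ a).2.2 = 𝟙 a.el :=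
      hT.2 _ _ (mArr_M S hU hmul _) (S.M_id a.el)
    show eArr S hU hmul (𝟙 a : a ⟶ a).2.1 ≫ mArr S hU hmul (𝟙 a : a ⟶ a).2.2 = 𝟙 a.el
    rw [h1, h2]; exact Category.comp_id _
  map_comp {a b c} f g := by
    have hw : g.1 = b.el * g.2.1.choose := g.2.1.choose_spec
    have hz : (f ≫ g).1 = f.1 * g.2.1.choose := Schutz.comp_val f g hw
    have ht : S.mid (mArr S hU hmul f.2.2 ≫ eArr S hU hmul g.2.1) = (f ≫ g).1 :=
      (mid_McompE S hT hU hmul _ (mArr_M S hU hmul _) _ (eArr_E S hU hmul _)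
        hw).trans hz.symm
    have he' : eArr S hU hmul (f ≫ g).2.1 =
        eArr S hU hmul f.2.1 ≫ (fe S _ ≫ eqToHom ht) :=
      hT.1 _ _ (eArr_E S hU hmul _)
        (S.E_comp _ _ (eArr_E S hU hmul _) (E_comp_eqToHom S _ _ (fe_E S _)))
    have hm' : mArr S hU hmul (f ≫ g).2.2 =
        (eqToHom ht.symm ≫ fm S _) ≫ mArr S hU hmul g.2.2 :=
      hT.2 _ _ (mArr_M S hU hmul _)
        (S.M_comp _ _ (M_eqToHom_comp S _ _ (fm_M S _)) (mArr_M S hU hmul _))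
    show eArr S hU hmul (f ≫ g).2.1 ≫ mArr S hU hmul (f ≫ g).2.2 =
      (eArr S hU hmul f.2.1 ≫ mArr S hU hmul f.2.2) ≫
        (eArr S hU hmul g.2.1 ≫ mArr S hU hmul g.2.2)
    rw [he', hm']
    simp only [Category.assoc, eqToHom_trans_assoc, eqToHom_refl, Category.id_comp]
    rw [← Category.assoc (fe S _), fe_fm]
    simp only [Category.assoc]

/-- The inverse functor `C ⥤ 𝔻(Ob C)`. -/
noncomputable def Gfun : C ⥤ Schutz C where
  obj X := ⟨X⟩
  map {X Y} g := ⟨S.mid g, mul_of_E S hU hmul hC (fe S g) (fe_E S g),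
    mul_of_M S hU hmul hC (fm S g) (fm_M S g)⟩
  map_id X := by
    apply Subtype.ext
    exact (mid_unique S (𝟙 X) (𝟙 X) (S.E_id X) (S.M_id X) (Category.comp_id _)).symm
  map_comp {X Y Z} g h := by
    apply Subtype.ext
    exact mid_comp S hT hU hmul g h
      (mul_of_E S hU hmul hC (fe S h) (fe_E S h)).choose_spec

end SFSAux

open SFSAux in
/-- Let `C` be a small category with a thin, complete SFS `(ℰ, ℳ)`
unital at `ζ`, let `∗` be the induced operation making `(Ob C, ∗, ζ)` a monoid, and
let `𝔻(Ob C, ∗, ζ)` be its Schützenberger category. Then the assignment that is the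
identity on objects and sends each morphism `x : a ⟶ b` of `𝔻(Ob C, ∗, ζ)` to the
composite (unique `ℰ`-morphism `a ⟶ x`) ≫ (unique `ℳ`-morphism `x ⟶ b`) in `C` is a
well-defined functor, maps `ℰ`-morphisms to `ℰ`-morphisms and `ℳ`-morphisms to
`ℳ`-morphisms, and is an isomorphism of categories, whose inverse sends a morphism of
`C` with factorization `a ⟶(ℰ) x ⟶(ℳ) b` to the morphism `x : a ⟶ b` of
`𝔻(Ob C, ∗, ζ)`. -/
theorem schutz_of_star_iso_original {C : Type u} [SmallCategory C] (S : SFS C)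
    (hT : S.Thin) (ζ : C) (hU : S.UnitalAt ζ) (hC : S.Complete) [Monoid C]
    (hmul : ∀ a b : C, a * b = S.star hU a b) (hone : (1 : C) = ζ) :
    ∃ (F : Schutz C ⥤ C) (hobj : ∀ X : Schutz C, F.obj X = X.el),
      (∀ (a b : Schutz C) (f : a ⟶ b) (e : a.el ⟶ (f.1 : C)) (m : (f.1 : C) ⟶ b.el),
          S.E e → S.M m →
          F.map f = CategoryTheory.eqToHom (hobj a) ≫ e ≫ m ≫
            CategoryTheory.eqToHom (hobj b).symm) ∧
      (∀ (a b : Schutz C) (f : a ⟶ b), Schutz.isE f →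
          S.E (CategoryTheory.eqToHom (hobj a).symm ≫ F.map f ≫
            CategoryTheory.eqToHom (hobj b))) ∧
      (∀ (a b : Schutz C) (f : a ⟶ b), Schutz.isM f →
          S.M (CategoryTheory.eqToHom (hobj a).symm ≫ F.map f ≫
            CategoryTheory.eqToHom (hobj b))) ∧
      ∃ G : C ⥤ Schutz C,
        F ⋙ G = 𝟭 (Schutz C) ∧ G ⋙ F = 𝟭 C ∧
        ∀ (X Y : C) (g : X ⟶ Y) (d : C) (e : X ⟶ d) (m : d ⟶ Y),
          S.E e → S.M m → e ≫ m = g → (G.map g).1 = d := by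
  classical
  refine ⟨Ffun S hT hU hmul, fun _ => rfl, ?_, ?_, ?_, Gfun S hT hU hmul hC, ?_, ?_, ?_⟩
  · intro a b f e m he hm
    change @Eq (a.el ⟶ b.el) (eArr S hU hmul f.2.1 ≫ mArr S hU hmul f.2.2)
      (eqToHom (rfl : a.el = a.el) ≫ e ≫ m ≫ eqToHom (rfl : b.el = b.el))
    simp only [eqToHom_refl, Category.comp_id, Category.id_comp]
    show eArr S hU hmul f.2.1 ≫ mArr S hU hmul f.2.2 = e ≫ m
    rw [hT.1 e _ he (eArr_E S hU hmul _), hT.2 m _ hm (mArr_M S hU hmul _)]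
  · intro a b f hf
    change S.E (eqToHom (rfl : a.el = a.el) ≫ (eArr S hU hmul f.2.1 ≫ mArr S hU hmul f.2.2) ≫
      eqToHom (rfl : b.el = b.el))
    simp only [eqToHom_refl, Category.comp_id, Category.id_comp]
    show S.E (eArr S hU hmul f.2.1 ≫ mArr S hU hmul f.2.2)
    have hm2 : mArr S hU hmul f.2.2 = eqToHom (show f.1 = b.el from hf) :=
      hT.2 _ _ (mArr_M S hU hmul _) (M_eqToHom S _)
    rw [hm2]
    exact E_comp_eqToHom S _ _ (eArr_E S hU hmul _)
  · intro a b f hf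
    change S.M (eqToHom (rfl : a.el = a.el) ≫ (eArr S hU hmul f.2.1 ≫ mArr S hU hmul f.2.2) ≫
      eqToHom (rfl : b.el = b.el))
    simp only [eqToHom_refl, Category.comp_id, Category.id_comp]
    show S.M (eArr S hU hmul f.2.1 ≫ mArr S hU hmul f.2.2)
    have he2 : eArr S hU hmul f.2.1 =
        eqToHom ((show f.1 = a.el from hf).symm) :=
      hT.1 _ _ (eArr_E S hU hmul _) (E_eqToHom S _)
    rw [he2]
    exact M_eqToHom_comp S _ _ (mArr_M S hU hmul _)
  · refine CategoryTheory.Functor.ext (fun X => rfl) (fun a b f => ?_)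
    simp only [Functor.comp_map, Functor.id_map, eqToHom_refl, Category.comp_id,
      Category.id_comp]
    change @Eq (a ⟶ b) ((Gfun S hT hU hmul hC).map ((Ffun S hT hU hmul).map f))
      (eqToHom (rfl : a = a) ≫ f ≫ eqToHom (rfl : b = b))
    rw [eqToHom_refl, eqToHom_refl, Category.id_comp, Category.comp_id]
    apply Subtype.ext
    exact (mid_unique S (eArr S hU hmul f.2.1) (mArr S hU hmul f.2.2)
      (eArr_E S hU hmul _) (mArr_M S hU hmul _) rfl).symm
  · refine CategoryTheory.Functor.ext (fun X => rfl) (fun X Y g => ?_)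
    simp only [Functor.comp_map, Functor.id_map, eqToHom_refl, Category.comp_id,
      Category.id_comp]
    change @Eq (X ⟶ Y) ((Ffun S hT hU hmul).map ((Gfun S hT hU hmul hC).map g))
      (eqToHom (rfl : X = X) ≫ g ≫ eqToHom (rfl : Y = Y))
    rw [eqToHom_refl, eqToHom_refl, Category.id_comp, Category.comp_id]
    show eArr S hU hmul (mul_of_E S hU hmul hC (fe S g) (fe_E S g)) ≫
        mArr S hU hmul (mul_of_M S hU hmul hC (fm S g) (fm_M S g)) = g
    rw [hT.1 _ (fe S g) (eArr_E S hU hmul _) (fe_E S g),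
      hT.2 _ (fm S g) (mArr_M S hU hmul _) (fm_M S g), fe_fm]
  · intro X Y g d e m he hm hcmp
    exact (mid_unique S e m he hm hcmp).symm
end

section
/- Let C and C' be small categories with thin, complete SFSs (ℰ, ℳ) and (ℰ', ℳ') unital at ζ and ζ' respectively, with induced operations ∗ and ∗'. Let H : C → C' be a functor with H(ℰ) ⊆ ℰ' and H(ℳ) ⊆ ℳ'. If H(ζ) ∗' H(ζ) = H(ζ), then the object map of H is multiplicative: H(a ∗ b) = H(a) ∗' H(b) for all objects a, b of C. In particular, if H(ζ) = ζ', the object map is a monoid homomorphism from (Ob C, ∗, ζ) to (Ob C', ∗', ζ'). -/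
open CategoryTheory

universe v u

section Aux

variable {C : Type u} [Category.{v} C] (S : SFS C)

lemma SFS.mid_unique {X Y : C} {f : X ⟶ Y} {d : C} (e : X ⟶ d) (m : d ⟶ Y)
    (hE : S.E e) (hM : S.M m) (h : e ≫ m = f) : S.mid f = d := by
  have h1 := (S.fact f).exists.choose_spec
  have h2 : (S.fact f).exists.choose = (⟨d, e, m⟩ : Σ d : C, (X ⟶ d) × (d ⟶ Y)) :=
    (S.fact f).unique h1 ⟨hE, hM, h⟩
  exact congrArg Sigma.fst h2

lemma SFS.eU_spec {ζ : C} (h : S.UnitalAt ζ) (a : C) : S.E (S.eU h a) :=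
  (h.1 a).exists.choose_spec

lemma SFS.mU_spec {ζ : C} (h : S.UnitalAt ζ) (a : C) : S.M (S.mU h a) :=
  (h.2 a).exists.choose_spec

lemma SFS.eU_unique {ζ : C} (h : S.UnitalAt ζ) {a : C} (e : ζ ⟶ a) (he : S.E e) :
    e = S.eU h a :=
  (h.1 a).unique he (S.eU_spec h a)

lemma SFS.mU_unique {ζ : C} (h : S.UnitalAt ζ) {a : C} (m : a ⟶ ζ) (hm : S.M m) :
    m = S.mU h a :=
  (h.2 a).unique hm (S.mU_spec h a)

end Aux

/-- Let `C` and `C'` be small categories with thin, complete SFSs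
`(ℰ, ℳ)` and `(ℰ', ℳ')` unital at `ζ` and `ζ'`, with induced operations `∗` and `∗'`.
Let `H : C ⥤ C'` preserve the classes. If `H(ζ) ∗' H(ζ) = H(ζ)`, then the object map
is multiplicative: `H(a ∗ b) = H(a) ∗' H(b)`. In particular, if `H(ζ) = ζ'`, the
object map is a monoid homomorphism. -/
theorem sfs_functor_multiplicative {C : Type u} {D : Type v}
    [SmallCategory C] [SmallCategory D]
    (S : SFS C) (T : SFS D) (hTS : S.Thin) (hTT : T.Thin)
    (ζ : C) (ζ' : D) (hUS : S.UnitalAt ζ) (hUT : T.UnitalAt ζ')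
    (hCS : S.Complete) (hCT : T.Complete) (H : C ⥤ D)
    (hE : ∀ (X Y : C) (f : X ⟶ Y), S.E f → T.E (H.map f))
    (hM : ∀ (X Y : C) (f : X ⟶ Y), S.M f → T.M (H.map f))
    (hsemi : T.star hUT (H.obj ζ) (H.obj ζ) = H.obj ζ) :
    (∀ a b : C, H.obj (S.star hUS a b) = T.star hUT (H.obj a) (H.obj b)) ∧
    (H.obj ζ = ζ' →
      (∀ a b : C, H.obj (S.star hUS a b) = T.star hUT (H.obj a) (H.obj b)) ∧
      H.obj ζ = ζ') := by
  have key : ∀ a b : C, H.obj (S.star hUS a b) = T.star hUT (H.obj a) (H.obj b) := by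
    intro a b
    set z := H.obj ζ with hz
    -- Step 1: mU' z ≫ eU' z = 𝟙 z
    obtain ⟨⟨d0, e0, m0⟩, hE0, hM0, hc0⟩ := (T.fact (T.mU hUT z ≫ T.eU hUT z)).exists
    have hd0 : d0 = z := by
      have := T.mid_unique e0 m0 hE0 hM0 hc0
      rw [← this]
      exact hsemi
    subst hd0
    have he0 : e0 = 𝟙 z := hTT.1 e0 (𝟙 z) hE0 (T.E_id z)
    have hm0 : m0 = 𝟙 z := hTT.2 m0 (𝟙 z) hM0 (T.M_id z)
    have hid : T.mU hUT z ≫ T.eU hUT z = 𝟙 z := by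
      rw [← hc0, he0, hm0, Category.comp_id]
    -- Step 2: factor m_a ≫ e_b in C
    obtain ⟨⟨d, e, m⟩, hEe, hMm, hc⟩ := (S.fact (S.mU hUS a ≫ S.eU hUS b)).exists
    have hstar : S.star hUS a b = d := S.mid_unique e m hEe hMm hc
    -- Step 3: identify mU'/eU' composites
    have hmu : H.map (S.mU hUS a) ≫ T.mU hUT z = T.mU hUT (H.obj a) :=
      T.mU_unique hUT _ (T.M_comp _ _ (hM _ _ _ (S.mU_spec hUS a)) (T.mU_spec hUT z))
    have heu : T.eU hUT z ≫ H.map (S.eU hUS b) = T.eU hUT (H.obj b) :=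
      T.eU_unique hUT _ (T.E_comp _ _ (T.eU_spec hUT z) (hE _ _ _ (S.eU_spec hUS b)))
    have hcomp : H.map e ≫ H.map m = T.mU hUT (H.obj a) ≫ T.eU hUT (H.obj b) := by
      rw [← H.map_comp, hc, H.map_comp, ← hmu, ← heu]
      simp only [Category.assoc]
      rw [← Category.assoc (T.mU hUT z), hid, Category.id_comp]
    have : T.star hUT (H.obj a) (H.obj b) = H.obj d :=
      T.mid_unique (H.map e) (H.map m) (hE _ _ _ hEe) (hM _ _ _ hMm) hcomp
    rw [hstar, this]
  exact ⟨key, fun h => ⟨key, h⟩⟩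
end

section
/- Let C and C' be small categories with thin, complete SFSs (ℰ, ℳ) and (ℰ', ℳ') unital at ζ and ζ' respectively. Let F, G : C → C' be functors with F(ℰ) ⊆ ℰ', F(ℳ) ⊆ ℳ', G(ℰ) ⊆ ℰ', G(ℳ) ⊆ ℳ', and F(ζ) = ζ' = G(ζ). If α : F ⟹ G is a natural transformation whose component at ζ is the identity of ζ', then F = G and α is the identity natural transformation. -/
open CategoryTheory

universe v u

/-- Transport of `ℰ`-membership along a precomposed `eqToHom`. -/
lemma E_eqToHom_comp {D : Type v} [Category D] (T : SFS D) {X Y Z : D}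
    (h : X = Y) (f : Y ⟶ Z) (hf : T.E f) : T.E (eqToHom h ≫ f) := by
  subst h; simpa using hf

/-- Transport of `ℳ`-membership along a postcomposed `eqToHom`. -/
lemma M_comp_eqToHom {D : Type v} [Category D] (T : SFS D) {X Y Z : D}
    (h : Y = Z) (f : X ⟶ Y) (hf : T.M f) : T.M (f ≫ eqToHom h) := by
  subst h; simpa using hf

/-- Unpacking an equality of factorization data. -/
lemma sigma_fact_eq {D : Type v} [Category D] {X Y : D}
    {p q : Σ d : D, (X ⟶ d) × (d ⟶ Y)} (h : p = q) :
    ∃ hd : p.1 = q.1,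
      p.2.1 = q.2.1 ≫ eqToHom hd.symm ∧ p.2.2 = eqToHom hd ≫ q.2.2 := by
  subst h; exact ⟨rfl, by simp, by simp⟩

/-- Let `C` and `C'` be small categories with thin, complete SFSs
unital at `ζ` and `ζ'`. Let `F, G : C ⥤ C'` preserve the classes, with
`F(ζ) = ζ' = G(ζ)`. If `α : F ⟹ G` is a natural transformation whose component at `ζ`
is the identity of `ζ'`, then `F = G` and `α` is the identity natural transformation. -/
theorem pointed_natural_transformation_trivial {C : Type u} {D : Type v}
    [SmallCategory C] [SmallCategory D]
    (S : SFS C) (T : SFS D) (hTS : S.Thin) (hTT : T.Thin)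
    (ζ : C) (ζ' : D) (hUS : S.UnitalAt ζ) (hUT : T.UnitalAt ζ')
    (hCS : S.Complete) (hCT : T.Complete)
    (F G : C ⥤ D)
    (hFE : ∀ (X Y : C) (f : X ⟶ Y), S.E f → T.E (F.map f))
    (hFM : ∀ (X Y : C) (f : X ⟶ Y), S.M f → T.M (F.map f))
    (hGE : ∀ (X Y : C) (f : X ⟶ Y), S.E f → T.E (G.map f))
    (hGM : ∀ (X Y : C) (f : X ⟶ Y), S.M f → T.M (G.map f))
    (hFz : F.obj ζ = ζ') (hGz : G.obj ζ = ζ')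
    (α : F ⟶ G) (hα : α.app ζ = CategoryTheory.eqToHom (hFz.trans hGz.symm)) :
    ∃ h : F = G, α = CategoryTheory.eqToHom h := by
  have key : ∀ a : C, ∃ h : F.obj a = G.obj a, α.app a = eqToHom h := by
    intro a
    obtain ⟨⟨d, e, m⟩, ⟨hE, hM, hc⟩, _⟩ := T.fact (α.app a)
    have hea : S.E (S.eU hUS a) := (hUS.1 a).exists.choose_spec
    have hma : S.M (S.mU hUS a) := (hUS.2 a).exists.choose_spec
    have hnat1 := α.naturality (S.eU hUS a)
    rw [hα] at hnat1
    have hE1 : T.E (F.map (S.eU hUS a) ≫ α.app a) := by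
      rw [hnat1]; exact E_eqToHom_comp T _ _ (hGE _ _ _ hea)
    have hnat2 := α.naturality (S.mU hUS a)
    rw [hα] at hnat2
    have hM2 : T.M (α.app a ≫ G.map (S.mU hUS a)) := by
      rw [← hnat2]; exact M_comp_eqToHom T _ _ (hFM _ _ _ hma)
    have u1 := (T.fact (F.map (S.eU hUS a) ≫ α.app a)).unique
      (y₁ := ⟨d, F.map (S.eU hUS a) ≫ e, m⟩)
      (y₂ := ⟨G.obj a, F.map (S.eU hUS a) ≫ α.app a, 𝟙 _⟩)
      ⟨T.E_comp _ _ (hFE _ _ _ hea) hE, hM, by rw [Category.assoc, hc]⟩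
      ⟨hE1, T.M_id _, Category.comp_id _⟩
    have u2 := (T.fact (α.app a ≫ G.map (S.mU hUS a))).unique
      (y₁ := ⟨F.obj a, 𝟙 _, α.app a ≫ G.map (S.mU hUS a)⟩)
      (y₂ := ⟨d, e, m ≫ G.map (S.mU hUS a)⟩)
      ⟨T.E_id _, hM2, Category.id_comp _⟩
      ⟨hE, T.M_comp _ _ hM (hGM _ _ _ hma), by rw [← Category.assoc, hc]⟩
    obtain ⟨hd1, -, hm1⟩ := sigma_fact_eq u1
    obtain ⟨hd2, he2, -⟩ := sigma_fact_eq u2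
    refine ⟨hd2.trans hd1, ?_⟩
    have he : e = eqToHom hd2 := by
      have := he2.symm
      simpa [eqToHom_trans] using congrArg (fun t => t ≫ eqToHom hd2) this
    rw [← hc, he, hm1]
    simp
  have hFG : F = G := by
    refine CategoryTheory.Functor.ext (fun a => (key a).choose) (fun X Y f => ?_)
    have hn := α.naturality f
    rw [(key X).choose_spec, (key Y).choose_spec] at hn
    calc F.map f = (F.map f ≫ eqToHom (key Y).choose) ≫ eqToHom ((key Y).choose).symm := by
          simp
      _ = eqToHom ((key X).choose) ≫ G.map f ≫ eqToHom ((key Y).choose).symm := by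
          rw [hn]; simp
  refine ⟨hFG, ?_⟩
  subst hFG
  apply NatTrans.ext
  funext a
  rw [(key a).choose_spec]
  simp [eqToHom_app]
end

section
/- Let M and M' be monoids and f, g : M → M' semigroup homomorphisms, with induced functors 𝔻(f), 𝔻(g) : 𝔻(M) → 𝔻(M'). The assignment sending a conjugation α : f ⇒ g to the family whose component at the object x ∈ M is the morphism f(x)*α = α*g(x) : f(x) → g(x) of 𝔻(M') is a bijection from the set of conjugations f ⇒ g to the set of natural transformations 𝔻(f) ⟹ 𝔻(g); the inverse sends a natural transformation to (the underlying element of) its component at 1. -/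
open CategoryTheory

universe u

namespace Schutz

/-- The action on morphisms of the functor `𝔻(h)` induced by a semigroup
homomorphism `h`. -/
noncomputable def dmapHom {M N : Type u} [Monoid M] [Monoid N] (f : M → N)
    (hf : ∀ a b : M, f (a * b) = f a * f b) {a b : Schutz M} (x : a ⟶ b) :
    (⟨f a.el⟩ : Schutz N) ⟶ (⟨f b.el⟩ : Schutz N) :=
  ⟨f x.1, ⟨f x.2.1.choose, by rw [← hf, ← x.2.1.choose_spec]⟩,
    ⟨f x.2.2.choose, by rw [← hf, ← x.2.2.choose_spec]⟩⟩

/-- The functor `𝔻(h) : 𝔻(M) ⥤ 𝔻(N)` induced by a semigroup homomorphism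
`h : M → N` (not necessarily preserving the identity). -/
noncomputable def dmap {M N : Type u} [Monoid M] [Monoid N] (f : M → N)
    (hf : ∀ a b : M, f (a * b) = f a * f b) : Schutz M ⥤ Schutz N where
  obj a := ⟨f a.el⟩
  map x := dmapHom f hf x
  map_id a := Subtype.ext rfl
  map_comp {a b c} x y := by
    apply Subtype.ext
    have hw := y.2.1.choose_spec
    have h2 : (dmapHom f hf y).1 = (⟨f b.el⟩ : Schutz N).el * f y.2.1.choose := by
      show f y.1 = f b.el * f y.2.1.choose
      rw [← hf, ← hw]
    show f ((x ≫ y).1) = (dmapHom f hf x ≫ dmapHom f hf y).1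
    rw [comp_val x y hw, hf, comp_val (dmapHom f hf x) (dmapHom f hf y) h2]
    rfl

end Schutz

/-- A conjugation `α : f ⇒ g` between semigroup homomorphisms of monoids:
`f(1)*α = α = α*g(1)` and `f(m)*α = α*g(m)` for every `m`. -/
def IsConjugation {M N : Type u} [Monoid M] [Monoid N] (f g : M → N) (α : N) : Prop :=
  f 1 * α = α ∧ α * g 1 = α ∧ ∀ m : M, f m * α = α * g m

section Aux

variable {M M' : Type u} [Monoid M] [Monoid M'] (f g : M → M')
  (hf : ∀ a b : M, f (a * b) = f a * f b) (hg : ∀ a b : M, g (a * b) = g a * g b)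

/-- The natural transformation induced by a conjugation. -/
noncomputable def conjToNat (α : {α : M' // IsConjugation f g α}) :
    Schutz.dmap f hf ⟶ Schutz.dmap g hg where
  app a := ⟨f a.el * α.1, ⟨α.1, rfl⟩, ⟨α.1, α.2.2.2 a.el⟩⟩
  naturality {a b} x := by
    apply Subtype.ext
    have hv := x.2.1.choose_spec
    set v := x.2.1.choose with hvdef
    have hw1 : ((⟨f b.el * α.1, ⟨α.1, rfl⟩, ⟨α.1, α.2.2.2 b.el⟩⟩ :
        Schutz.Hom ⟨f b.el⟩ ⟨g b.el⟩)).1 = ((⟨f b.el⟩ : Schutz M')).el * α.1 := rfl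
    have hw2 : (Schutz.dmapHom g hg x).1 = ((⟨g a.el⟩ : Schutz M')).el * g v := by
      show g x.1 = g a.el * g v
      rw [← hg, ← hv]
    show (Schutz.dmapHom f hf x ≫ _).1 = (_ ≫ Schutz.dmapHom g hg x).1
    refine (Schutz.comp_val _ _ hw1).trans (Eq.trans ?_ (Schutz.comp_val _ _ hw2).symm)
    show f x.1 * α.1 = f a.el * α.1 * g v
    calc f x.1 * α.1 = f a.el * (f v * α.1) := by rw [hv, hf, mul_assoc]
      _ = f a.el * (α.1 * g v) := by rw [α.2.2.2]
      _ = f a.el * α.1 * g v := by rw [mul_assoc]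

/-- The element of a natural transformation's component at `1` is a conjugation. -/
theorem natToConj (τ : Schutz.dmap f hf ⟶ Schutz.dmap g hg) :
    IsConjugation f g (τ.app ⟨1⟩).1 := by
  set α := (τ.app ⟨1⟩).1 with hα
  obtain ⟨⟨v, hv⟩, u, hu⟩ := (τ.app (⟨1⟩ : Schutz M)).2
  have hv' : α = f 1 * v := hv
  have hu' : α = u * g 1 := hu
  refine ⟨?_, ?_, ?_⟩
  · rw [hv', ← mul_assoc, ← hf, mul_one]
  · rw [hu', mul_assoc, ← hg, mul_one]
  · intro m
    set φ : (⟨1⟩ : Schutz M) ⟶ ⟨1⟩ :=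
      ⟨m, ⟨m, (one_mul m).symm⟩, ⟨m, (mul_one m).symm⟩⟩ with hφ
    have h1 := congrArg Subtype.val (τ.naturality φ)
    rw [Schutz.comp_val _ _ (show (τ.app (⟨1⟩ : Schutz M)).1 = f 1 * v from hv')] at h1
    rw [Schutz.comp_val _ _ (show ((Schutz.dmap g hg).map φ).1 = g 1 * g m by
      show g m = g 1 * g m; rw [← hg, one_mul])] at h1
    have h2 : f m * α = f m * v := by rw [hv', ← mul_assoc, ← hf, mul_one]
    rw [h2]
    exact h1

/-- Every component is determined by the component at `1`. -/
theorem natTrans_app_val (τ : Schutz.dmap f hf ⟶ Schutz.dmap g hg) (a : Schutz M) :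
    (τ.app a).1 = f a.el * (τ.app ⟨1⟩).1 := by
  obtain ⟨⟨v, hv⟩, -⟩ := (τ.app (⟨1⟩ : Schutz M)).2
  obtain ⟨-, u, hu⟩ := (τ.app a).2
  have hv' : (τ.app (⟨1⟩ : Schutz M)).1 = f 1 * v := hv
  have hu' : (τ.app a).1 = u * g a.el := hu
  set φ : a ⟶ (⟨1⟩ : Schutz M) :=
    ⟨a.el, ⟨1, (mul_one _).symm⟩, ⟨a.el, (mul_one _).symm⟩⟩ with hφ
  have hnat := congrArg Subtype.val (τ.naturality φ)
  rw [Schutz.comp_val _ _ (show (τ.app (⟨1⟩ : Schutz M)).1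
      = ((⟨f 1⟩ : Schutz M')).el * v from hv')] at hnat
  rw [Schutz.comp_val _ _ (show ((Schutz.dmap g hg).map φ).1
      = ((⟨g a.el⟩ : Schutz M')).el * g 1 by
        show g a.el = g a.el * g 1; rw [← hg, mul_one])] at hnat
  have h1 : ((Schutz.dmap f hf).map φ).1 = f a.el := rfl
  rw [h1] at hnat
  have h2 : f a.el * (τ.app (⟨1⟩ : Schutz M)).1 = f a.el * v := by
    rw [hv', ← mul_assoc, ← hf, mul_one]
  have h3 : (τ.app a).1 * g 1 = (τ.app a).1 := by
    rw [hu', mul_assoc, ← hg, mul_one]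
  rw [h2, hnat, h3]

end Aux

/-- Let `M`, `M'` be monoids and `f, g : M → M'` semigroup
homomorphisms, with induced functors `𝔻(f), 𝔻(g) : 𝔻(M) ⥤ 𝔻(M')`. The assignment
sending a conjugation `α : f ⇒ g` to the family whose component at the object `x ∈ M`
is the morphism `f(x)*α = α*g(x) : f(x) ⟶ g(x)` of `𝔻(M')` is a bijection from
conjugations `f ⇒ g` to natural transformations `𝔻(f) ⟹ 𝔻(g)`; the inverse sends a
natural transformation to (the underlying element of) its component at `1`. -/
theorem conjugations_equiv_natTrans {M M' : Type u} [Monoid M] [Monoid M']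
    (f g : M → M') (hf : ∀ a b : M, f (a * b) = f a * f b)
    (hg : ∀ a b : M, g (a * b) = g a * g b) :
    ∃ Φ : {α : M' // IsConjugation f g α} ≃ (Schutz.dmap f hf ⟶ Schutz.dmap g hg),
      (∀ (α : {α : M' // IsConjugation f g α}) (x : M),
        ((Φ α).app ⟨x⟩).1 = f x * α.1 ∧ ((Φ α).app ⟨x⟩).1 = α.1 * g x) ∧
      (∀ τ : Schutz.dmap f hf ⟶ Schutz.dmap g hg, (Φ.symm τ).1 = (τ.app ⟨1⟩).1) := by
  refine ⟨⟨conjToNat f g hf hg, fun τ => ⟨(τ.app ⟨1⟩).1, natToConj f g hf hg τ⟩,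
    ?_, ?_⟩, ?_, fun τ => rfl⟩
  · intro α
    apply Subtype.ext
    show ((conjToNat f g hf hg α).app ⟨1⟩).1 = α.1
    show f 1 * α.1 = α.1
    exact α.2.1
  · intro τ
    apply NatTrans.ext
    funext a
    apply Subtype.ext
    show f a.el * (τ.app ⟨1⟩).1 = (τ.app a).1
    exact (natTrans_app_val f g hf hg τ a).symm
  · intro α x
    refine ⟨rfl, ?_⟩
    exact α.2.2.2 x
end

section
/- Two monoids M and M' (with identities 1 and 1') are Morita equivalent — i.e., there exist an idempotent e ∈ M, elements x, y ∈ M with x*e*y = 1, and a monoid isomorphism from M' onto eMe = {m ∈ M | e*m*e = m} (a monoid under the multiplication of M with identity e) — if and only if there exist semigroup homomorphisms f : M → M' and g : M' → M together with elements η, β ∈ M and ε, μ ∈ M' such that: η is a conjugation id_M ⇒ g∘f with η*β = 1 and β*η = g(f(1)); ε is a conjugation f∘g ⇒ id_{M'} with ε*μ = f(g(1')) and μ*ε = 1'; and the triangle identities f(1) = f(η)*ε and g(1') = η*g(ε) hold. -/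
universe u v

/-- Two monoids `M` and `M'` are Morita equivalent — i.e. there
exist an idempotent `e ∈ M`, elements `x, y ∈ M` with `x*e*y = 1`, and a monoid
isomorphism from `M'` onto `eMe = {m | e*m*e = m}` (with multiplication of `M` and
identity `e`) — if and only if there exist semigroup homomorphisms `f : M → M'` and
`g : M' → M` together with elements `η, β ∈ M` and `ε, μ ∈ M'` such that: `η` is a
conjugation `id_M ⇒ g∘f` with `η*β = 1` and `β*η = g(f(1))`; `ε` is a conjugation
`f∘g ⇒ id_M'` with `ε*μ = f(g(1'))` and `μ*ε = 1'`; and the triangle identities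
`f(1) = f(η)*ε` and `g(1') = η*g(ε)` hold. -/
theorem morita_iff_adjoint_equivalence (M : Type u) (M' : Type v)
    [Monoid M] [Monoid M'] :
    (∃ (e x y : M) (φ : M' → M),
        e * e = e ∧ x * e * y = 1 ∧
        (∀ a b : M', φ (a * b) = φ a * φ b) ∧ φ 1 = e ∧
        Function.Injective φ ∧
        (∀ m' : M', e * φ m' * e = φ m') ∧
        (∀ m : M, e * m * e = m → ∃ m', φ m' = m)) ↔
    (∃ (f : M → M') (g : M' → M) (η β : M) (ε μ : M'),
        (∀ a b : M, f (a * b) = f a * f b) ∧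
        (∀ a b : M', g (a * b) = g a * g b) ∧
        η * g (f 1) = η ∧ (∀ m : M, m * η = η * g (f m)) ∧
        η * β = 1 ∧ β * η = g (f 1) ∧
        f (g 1) * ε = ε ∧ (∀ m' : M', f (g m') * ε = ε * m') ∧
        ε * μ = f (g 1) ∧ μ * ε = 1 ∧
        f 1 = f η * ε ∧ g 1 = η * g ε) := by
  constructor
  · rintro ⟨e, x, y, φ, he, hxy, hφmul, hφ1, hφinj, hφrange, hφsurj⟩
    choose ψ hψ using hφsurj
    have hE : ∀ t : M, e * (e * t * e) * e = e * t * e := by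
      intro t
      have h1 : e * (e * t * e) * e = (e * e) * t * (e * e) := by simp [mul_assoc]
      rw [h1, he]
    have hee : ∀ t : M, e * (e * t) = e * t := by
      intro t; rw [← mul_assoc, he]
    have hxye : ∀ t : M, x * (e * (y * t)) = t := by
      intro t; rw [← mul_assoc, ← mul_assoc, hxy, one_mul]
    have hxy' : x * (e * y) = 1 := by rw [← mul_assoc, hxy]
    have heφ : ∀ m', e * φ m' = φ m' := by
      intro m'
      calc e * φ m' = e * (e * φ m' * e) := by rw [hφrange]
        _ = (e * e) * φ m' * e := by simp [mul_assoc]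
        _ = φ m' := by rw [he, hφrange]
    have hφe : ∀ m', φ m' * e = φ m' := by
      intro m'
      calc φ m' * e = (e * φ m' * e) * e := by rw [hφrange]
        _ = e * φ m' * (e * e) := by simp [mul_assoc]
        _ = φ m' := by rw [he, hφrange]
    refine ⟨fun m => ψ (e * (y * m * x) * e) (hE _), φ, x * e, e * y,
      ψ (e * y * e) (hE _), ψ (e * x * e) (hE _), ?_, hφmul, ?_, ?_, ?_, ?_, ?_, ?_, ?_, ?_, ?_, ?_⟩
    · -- f multiplicative
      intro a b
      apply hφinj
      rw [hφmul, hψ, hψ, hψ]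
      simp only [mul_assoc]
      rw [hee, hxye]
    · -- η * g (f 1) = η
      rw [hψ]
      simp only [mul_assoc, one_mul, mul_one]
      rw [hee, hxye]
    · -- ∀ m, m * η = η * g (f m)
      intro m
      rw [hψ]
      simp only [mul_assoc]
      rw [hee, hxye]
    · -- η * β = 1
      rw [mul_assoc, hee, hxy']
    · -- β * η = g (f 1)
      rw [hψ]
      simp only [mul_assoc, one_mul, mul_one]
    · -- f (g 1) * ε = ε
      apply hφinj
      rw [hφmul, hψ, hψ, hφ1]
      simp only [mul_assoc]
      rw [hee, hxye, he]
    · -- ∀ m', f (g m') * ε = ε * m'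
      intro m'
      apply hφinj
      rw [hφmul, hφmul, hψ, hψ]
      simp only [mul_assoc]
      rw [hee, hxye, hφe, heφ]
    · -- ε * μ = f (g 1)
      apply hφinj
      rw [hφmul, hψ, hψ, hψ, hφ1]
      simp only [mul_assoc]
      rw [hee]
    · -- μ * ε = 1
      apply hφinj
      rw [hφmul, hψ, hψ, hφ1]
      simp only [mul_assoc]
      rw [hee, hxye, he]
    · -- f 1 = f η * ε
      apply hφinj
      rw [hφmul, hψ, hψ, hψ]
      simp only [mul_assoc, one_mul, mul_one]
      rw [hee, hxye, he]
    · -- g 1 = η * g ε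
      rw [hφ1, hψ]
      simp only [mul_assoc]
      rw [hee, hxye]
  · rintro ⟨f, g, η, β, ε, μ, hf, hg, hη1, hη2, hηβ, hβη, hε1, hε2, hεμ, hμε, htr1, htr2⟩
    have hgf : ∀ a : M, g (f a) = β * a * η := by
      intro a
      calc g (f a) = g (f (1 * a)) := by rw [one_mul]
        _ = g (f 1 * f a) := by rw [hf]
        _ = g (f 1) * g (f a) := hg _ _
        _ = β * η * g (f a) := by rw [hβη]
        _ = β * (η * g (f a)) := mul_assoc _ _ _
        _ = β * (a * η) := by rw [hη2]
        _ = β * a * η := (mul_assoc _ _ _).symm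
    refine ⟨g 1, η, β, g, ?_, ?_, hg, rfl, ?_, ?_, ?_⟩
    · rw [← hg, one_mul]
    · calc η * g 1 * β = η * g 1 * β * (η * β) := by rw [hηβ, mul_one]
        _ = η * (g 1 * (β * η)) * β := by simp [mul_assoc]
        _ = η * (g 1 * g (f 1)) * β := by rw [hβη]
        _ = η * g (1 * f 1) * β := by rw [hg]
        _ = η * g (f 1) * β := by rw [one_mul]
        _ = η * β := by rw [hη1]
        _ = 1 := hηβ
    · intro a b hab
      calc a = μ * ε * a := by rw [hμε, one_mul]
        _ = μ * (ε * a) := mul_assoc _ _ _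
        _ = μ * (f (g a) * ε) := by rw [hε2]
        _ = μ * (f (g b) * ε) := by rw [hab]
        _ = μ * (ε * b) := by rw [hε2]
        _ = μ * ε * b := (mul_assoc _ _ _).symm
        _ = b := by rw [hμε, one_mul]
    · intro m'
      rw [← hg, ← hg, one_mul, mul_one]
    · intro m hm
      have hme : m * g 1 = m := by
        calc m * g 1 = (g 1 * m * g 1) * g 1 := by rw [hm]
          _ = g 1 * m * (g 1 * g 1) := by simp [mul_assoc]
          _ = g 1 * m * g 1 := by rw [← hg, one_mul]
          _ = m := hm
      have hem : g 1 * m = m := by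
        calc g 1 * m = g 1 * (g 1 * m * g 1) := by rw [hm]
          _ = (g 1 * g 1) * m * g 1 := by simp [mul_assoc]
          _ = g 1 * m * g 1 := by rw [← hg, one_mul]
          _ = m := hm
      have hf1ε : f 1 * ε = ε := by
        calc f 1 * ε = f 1 * (f (g 1) * ε) := by rw [hε1]
          _ = f (1 * g 1) * ε := by rw [hf, mul_assoc]
          _ = ε := by rw [one_mul, hε1]
      refine ⟨μ * f m * ε, ?_⟩
      calc g (μ * f m * ε) = g (μ * f m) * g ε := hg _ _
        _ = g μ * g (f m) * g ε := by rw [hg]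
        _ = g μ * (β * m * η) * g ε := by rw [hgf]
        _ = g μ * (β * (m * (η * g ε))) := by simp [mul_assoc]
        _ = g μ * (β * (m * g 1)) := by rw [← htr2]
        _ = g μ * (β * (g 1 * m)) := by rw [hme, hem]
        _ = (g μ * (β * (η * g ε))) * m := by rw [← htr2]; simp [mul_assoc]
        _ = (g μ * (β * η) * g ε) * m := by simp [mul_assoc]
        _ = (g μ * g (f 1) * g ε) * m := by rw [hβη]
        _ = g (μ * f 1 * ε) * m := by rw [hg, hg]
        _ = g (μ * ε) * m := by rw [mul_assoc, hf1ε]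
        _ = g 1 * m := by rw [hμε]
        _ = m := hem
end

section
/- Let M and M' be monoids with identities 1 and 1', f : M → M' and g : M' → M semigroup homomorphisms, η, β ∈ M and ε, μ ∈ M' such that: η is a conjugation id_M ⇒ g∘f with η*β = 1 and β*η = g(f(1)); ε is a conjugation f∘g ⇒ id_{M'} with ε*μ = f(g(1')) and μ*ε = 1'; f(1) = f(η)*ε and g(1') = η*g(ε); and additionally β is a conjugation g∘f ⇒ id_M and μ is a conjugation id_{M'} ⇒ f∘g with g(1') = g(μ)*β and f(1) = μ*f(β). Set e := g(1'). Then: e is an idempotent of M; e*g(m')*e = g(m') for every m' ∈ M'; 1 = η*e*g(f(1))*β (so there exist u, v ∈ M with u*e*v = 1); and the map h defined by h(m) = μ*f(m)*ε satisfies h(g(m')) = m' for all m' ∈ M' and g(h(m)) = m for every m ∈ M with e*m*e = m. Hence g restricts to a monoid isomorphism from M' onto eMe. -/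
universe u v

/-- Let `M`, `M'` be monoids, `f : M → M'`, `g : M' → M` semigroup
homomorphisms, `η, β ∈ M`, `ε, μ ∈ M'` with: `η` a conjugation `id_M ⇒ g∘f` with
`η*β = 1`, `β*η = g(f(1))`; `ε` a conjugation `f∘g ⇒ id_M'` with `ε*μ = f(g(1'))`,
`μ*ε = 1'`; the triangle identities `f(1) = f(η)*ε`, `g(1') = η*g(ε)`; `β` a
conjugation `g∘f ⇒ id_M`; `μ` a conjugation `id_M' ⇒ f∘g`; `g(1') = g(μ)*β` and
`f(1) = μ*f(β)`. Set `e := g(1')`. Then `e` is idempotent, `e*g(m')*e = g(m')`,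
`1 = η*e*g(f(1))*β`, the map `h(m) = μ*f(m)*ε` satisfies `h(g(m')) = m'` and
`g(h(m)) = m` whenever `e*m*e = m`; hence `g` restricts to a monoid isomorphism from
`M'` onto `eMe`. -/
theorem adjoint_equivalence_gives_enlargement {M : Type u} {M' : Type v}
    [Monoid M] [Monoid M']
    (f : M → M') (g : M' → M)
    (hf : ∀ a b : M, f (a * b) = f a * f b)
    (hg : ∀ a b : M', g (a * b) = g a * g b)
    (η β : M) (ε μ : M')
    (hη1 : η * g (f 1) = η) (hη2 : ∀ m : M, m * η = η * g (f m))
    (hηβ : η * β = 1) (hβη : β * η = g (f 1))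
    (hε1 : f (g 1) * ε = ε) (hε2 : ∀ m' : M', f (g m') * ε = ε * m')
    (hεμ : ε * μ = f (g 1)) (hμε : μ * ε = 1)
    (htri1 : f 1 = f η * ε) (htri2 : g 1 = η * g ε)
    (hβ1 : g (f 1) * β = β) (hβ2 : ∀ m : M, g (f m) * β = β * m)
    (hμ1 : μ * f (g 1) = μ) (hμ2 : ∀ m' : M', m' * μ = μ * f (g m'))
    (htri3 : g 1 = g μ * β) (htri4 : f 1 = μ * f β) :
    (g 1 * g 1 = g 1) ∧
    (∀ m' : M', g 1 * g m' * g 1 = g m') ∧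
    (1 = η * g 1 * g (f 1) * β) ∧
    (∀ m' : M', μ * f (g m') * ε = m') ∧
    (∀ m : M, g 1 * m * g 1 = m → g (μ * f m * ε) = m) ∧
    (∀ m : M, g 1 * m * g 1 = m → ∃ m', g m' = m) ∧
    Function.Injective g := by
  have hgf : ∀ m : M, g (f m) = β * m * η := by
    intro m
    rw [mul_assoc, hη2, ← mul_assoc, hβη, ← hg, ← hf, one_mul]
  have h4 : ∀ m' : M', μ * f (g m') * ε = m' := by
    intro m'
    rw [← hμ2, mul_assoc, hμε, mul_one]
  refine ⟨?_, ?_, ?_, h4, ?_, ?_, ?_⟩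
  · rw [← hg, one_mul]
  · intro m'; rw [← hg, ← hg, one_mul, mul_one]
  · rw [mul_assoc η, ← hg, one_mul, hη1, hηβ]
  · intro m hm
    rw [hg, hg, hgf]
    simp only [← mul_assoc]
    rw [← htri3, mul_assoc (g 1 * m), ← htri2, hm]
  · intro m hm
    exact ⟨μ * f m * ε, by
      rw [hg, hg, hgf]
      simp only [← mul_assoc]
      rw [← htri3, mul_assoc (g 1 * m), ← htri2, hm]⟩
  · intro a b hab
    rw [← h4 a, ← h4 b, hab]
end
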